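/- arXiv:2312.04061 — 2 statements merged into one kernel-verified Lean document; each statement's English description precedes it below -/
import Mathlib

section
/- Assume ε = 1, i.e. J is an invertible symmetric n×n matrix over 𝔽_q (so G(J) is an orthogonal group). For any two admissible pairs (X, Y) and (X', Y') (so that X·(−J⁻¹·Xᵀ) = 2Y and X'·(−J⁻¹·X'ᵀ) = 2Y'), the matrices N(X, Y) and N(X', Y') are conjugate by an element of G(J) if and only if Y'·Y⁻¹ is a square in 𝔽_qˣ; in particular, the G(J)-conjugacy class of N(X, Y) depends only on, and is determined by, the square class of Y. (Lemma 3.3(ii)(iii), orthogonal case.) -/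
open Matrix

variable {F : Type*} [Field F] {n : ℕ}

/-- `N(X,Y) = I - ᵅX·Y⁻¹·X = I + Y⁻¹·J⁻¹·Xᵀ·X`. -/
noncomputable def Nmat (J : Matrix (Fin n) (Fin n) F)
    (X : Matrix (Fin 1) (Fin n) F) (Y : F) : Matrix (Fin n) (Fin n) F :=
  1 + Y⁻¹ • (J⁻¹ * Xᵀ * X)

/-- `A` and `B` are conjugate by an element of the isometry group `G(J)`. -/
def IsGJConj (J A B : Matrix (Fin n) (Fin n) F) : Prop :=
  ∃ g : Matrix (Fin n) (Fin n) F, gᵀ * J * g = J ∧ g * A * g⁻¹ = B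

/-
Write `⟨Z, W⟩ = Z J⁻¹ Wᵀ` for row vectors. Then `X N(Z, Y) = X + Y⁻¹⟨X, Z⟩ Z`, so for an
admissible pair `(Z, Y)` the matrix `N(Z, Y)` is the orthogonal reflection in `Z`, and
`g N(X g, Y) g⁻¹ = N(X, Y)` for every `g ∈ G(J)`.

If `g N(X, Y) g⁻¹ = N(X', Y')`, then `N(W, Y) = N(X', Y')` with `W = X g⁻¹`; applying both sides
to `X'` and pairing with `X'` gives `Y⁻¹⟨X', W⟩² = 4Y'`, so `Y'/Y` is a square.
Conversely, if `Y' = μ²Y` then `X'` and `μX` have the same nonzero norm, so by Witt's argument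
one or two reflections carry `X'` to `μX`, and `N(μX, μ²Y) = N(X, Y)`.
-/

noncomputable def rowForm (J : Matrix (Fin n) (Fin n) F) :
    LinearMap.BilinForm F (Matrix (Fin 1) (Fin n) F) :=
  LinearMap.mk₂ F (fun Z W => (Z * J⁻¹ * Wᵀ) 0 0)
    (fun _ _ _ => by simp [Matrix.add_mul]) (fun _ _ _ => by simp)
    (fun _ _ _ => by simp [Matrix.mul_add]) (fun _ _ _ => by simp)

section RowForm

variable {J : Matrix (Fin n) (Fin n) F}

lemma rowForm_apply (Z W : Matrix (Fin 1) (Fin n) F) :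
    rowForm J Z W = (Z * J⁻¹ * Wᵀ) 0 0 := rfl

lemma rowForm_smul_one (Z W : Matrix (Fin 1) (Fin n) F) :
    rowForm J Z W • (1 : Matrix (Fin 1) (Fin 1) F) = Z * J⁻¹ * Wᵀ := by
  ext i j
  simp [Subsingleton.elim i 0, Subsingleton.elim j 0, rowForm_apply]

lemma rowForm_comm (hJt : Jᵀ = J) (Z W : Matrix (Fin 1) (Fin n) F) :
    rowForm J Z W = rowForm J W Z := by
  have h : (Z * J⁻¹ * Wᵀ)ᵀ = W * J⁻¹ * Zᵀ := by
    simp [Matrix.transpose_mul, Matrix.transpose_nonsing_inv, hJt, Matrix.mul_assoc]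
  rw [rowForm_apply, rowForm_apply, ← h, Matrix.transpose_apply]

lemma rowForm_self_of_admissible {X : Matrix (Fin 1) (Fin n) F} {Y : F}
    (hadm : (X * (-(J⁻¹ * Xᵀ))) 0 0 = 2 * Y) : rowForm J X X = -(2 * Y) := by
  rw [rowForm_apply, Matrix.mul_assoc, ← hadm, Matrix.mul_neg, Matrix.neg_apply, neg_neg]

end RowForm

section Nmat

variable {J : Matrix (Fin n) (Fin n) F}

lemma row_mul_Nmat (X Z : Matrix (Fin 1) (Fin n) F) (Y : F) :
    X * Nmat J Z Y = X + (Y⁻¹ * rowForm J X Z) • Z := by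
  rw [Nmat, Matrix.mul_add, Matrix.mul_one, Matrix.mul_smul, ← Matrix.mul_assoc,
    ← Matrix.mul_assoc, ← rowForm_smul_one, Matrix.smul_mul, Matrix.one_mul, smul_smul]

lemma Nmat_smul {t : F} (ht : t ≠ 0) (Z : Matrix (Fin 1) (Fin n) F) (Y : F) :
    Nmat J (t • Z) (t ^ 2 * Y) = Nmat J Z Y := by
  simp only [Nmat, Matrix.transpose_smul, Matrix.mul_smul, Matrix.smul_mul, smul_smul]
  congr 2
  field_simp

lemma Nmat_mul_self {Z : Matrix (Fin 1) (Fin n) F} {Y : F} (hY : Y ≠ 0)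
    (hZ : rowForm J Z Z = -(2 * Y)) : Nmat J Z Y * Nmat J Z Y = 1 := by
  have hZN : Z * Nmat J Z Y = -Z := by
    rw [row_mul_Nmat, hZ]
    field_simp
    module
  calc Nmat J Z Y * Nmat J Z Y
      = Nmat J Z Y + Y⁻¹ • (J⁻¹ * Zᵀ * (Z * Nmat J Z Y)) := by
        nth_rw 1 [Nmat]
        rw [Matrix.add_mul, Matrix.one_mul, Matrix.smul_mul]
        simp only [Matrix.mul_assoc]
    _ = 1 := by
        rw [hZN, Matrix.mul_neg, smul_neg, Nmat, add_neg_cancel_right]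

lemma Nmat_transpose_mul (hJ : IsUnit J) (hJt : Jᵀ = J) (Z : Matrix (Fin 1) (Fin n) F) (Y : F) :
    (Nmat J Z Y)ᵀ * J = J * Nmat J Z Y := by
  have hd : IsUnit J.det := (Matrix.isUnit_iff_isUnit_det J).mp hJ
  simp only [Nmat, Matrix.transpose_add, Matrix.transpose_smul, Matrix.transpose_mul,
    Matrix.transpose_transpose, Matrix.transpose_one, Matrix.transpose_nonsing_inv, hJt,
    Matrix.add_mul, Matrix.mul_add, Matrix.smul_mul, Matrix.mul_smul, Matrix.one_mul,
    Matrix.mul_one, Matrix.nonsing_inv_mul_cancel_right _ _ hd, ← Matrix.mul_assoc,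
    Matrix.mul_nonsing_inv _ hd]

lemma Nmat_isometry (hJ : IsUnit J) (hJt : Jᵀ = J) {Z : Matrix (Fin 1) (Fin n) F} {Y : F}
    (hY : Y ≠ 0) (hZ : rowForm J Z Z = -(2 * Y)) :
    (Nmat J Z Y)ᵀ * J * Nmat J Z Y = J := by
  rw [Nmat_transpose_mul hJ hJt, Matrix.mul_assoc, Nmat_mul_self hY hZ, Matrix.mul_one]

lemma isSquare_of_Nmat_eq (hJt : Jᵀ = J) (h2 : (2 : F) ≠ 0)
    {W X' : Matrix (Fin 1) (Fin n) F} {Y Y' : F} (hX' : rowForm J X' X' = -(2 * Y'))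
    (h : Nmat J W Y = Nmat J X' Y') : IsSquare (Y' * Y⁻¹) := by
  set b := rowForm J X' W
  have hrow : (Y⁻¹ * b) • W = (Y'⁻¹ * -(2 * Y')) • X' := by
    simpa only [row_mul_Nmat, hX', add_right_inj] using congrArg (X' * ·) h
  have hpair : Y⁻¹ * b * b = 4 * Y' := by
    have := congrArg (rowForm J · X') hrow
    simp only [map_smul, LinearMap.smul_apply, smul_eq_mul, ← rowForm_comm hJt X' W, hX'] at this
    linear_combination this + 4 * inv_mul_mul_self Y'
  refine ⟨b / (2 * Y), ?_⟩
  field_simp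
  linear_combination (-Y⁻¹) * hpair

end Nmat

section Isometry

variable {J g : Matrix (Fin n) (Fin n) F}

lemma isUnit_det_of_isometry (hJ : IsUnit J) (hg : gᵀ * J * g = J) : IsUnit g.det := by
  have hd : IsUnit J.det := (Matrix.isUnit_iff_isUnit_det J).mp hJ
  refine Matrix.isUnit_det_of_left_inverse (B := J⁻¹ * gᵀ * J) ?_
  rw [show J⁻¹ * gᵀ * J * g = J⁻¹ * (gᵀ * J * g) by simp only [Matrix.mul_assoc], hg,
    Matrix.nonsing_inv_mul _ hd]

lemma mul_inv_mul_transpose_of_isometry (hJ : IsUnit J) (hg : gᵀ * J * g = J) :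
    g * J⁻¹ * gᵀ = J⁻¹ := by
  have hd : IsUnit J.det := (Matrix.isUnit_iff_isUnit_det J).mp hJ
  have hginv : g⁻¹ = J⁻¹ * gᵀ * J := by
    refine Matrix.inv_eq_left_inv ?_
    rw [show J⁻¹ * gᵀ * J * g = J⁻¹ * (gᵀ * J * g) by simp only [Matrix.mul_assoc], hg,
      Matrix.nonsing_inv_mul _ hd]
  refine (Matrix.inv_eq_left_inv ?_).symm
  rw [show g * J⁻¹ * gᵀ * J = g * (J⁻¹ * gᵀ * J) by simp only [Matrix.mul_assoc], ← hginv,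
    Matrix.mul_nonsing_inv _ (isUnit_det_of_isometry hJ hg)]

lemma isometry_mul {h : Matrix (Fin n) (Fin n) F} (hg : gᵀ * J * g = J)
    (hh : hᵀ * J * h = J) : (g * h)ᵀ * J * (g * h) = J := by
  rw [show (g * h)ᵀ * J * (g * h) = hᵀ * (gᵀ * J * g) * h by
    simp only [Matrix.transpose_mul, Matrix.mul_assoc], hg, hh]

lemma conj_Nmat_mul (hJ : IsUnit J) (hg : gᵀ * J * g = J) (X : Matrix (Fin 1) (Fin n) F)
    (Y : F) : g * Nmat J (X * g) Y * g⁻¹ = Nmat J X Y := by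
  have hgg : g * g⁻¹ = 1 := Matrix.mul_nonsing_inv _ (isUnit_det_of_isometry hJ hg)
  calc g * Nmat J (X * g) Y * g⁻¹
      = g * g⁻¹ + Y⁻¹ • ((g * J⁻¹ * gᵀ) * Xᵀ * X * (g * g⁻¹)) := by
        simp only [Nmat, Matrix.transpose_mul, Matrix.mul_add, Matrix.add_mul, Matrix.mul_one,
          Matrix.mul_smul, Matrix.smul_mul, Matrix.mul_assoc]
    _ = Nmat J X Y := by
        rw [hgg, mul_inv_mul_transpose_of_isometry hJ hg, Matrix.mul_one, Nmat]

end Isometry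

section Witt

variable {J : Matrix (Fin n) (Fin n) F}

lemma exists_isometry_mul_eq_of_anisotropic_sub (hJ : IsUnit J) (hJt : Jᵀ = J)
    {u v : Matrix (Fin 1) (Fin n) F} (huv : rowForm J u u = rowForm J v v)
    (hsub : rowForm J (u - v) (u - v) ≠ 0) :
    ∃ g : Matrix (Fin n) (Fin n) F, gᵀ * J * g = J ∧ u * g = v := by
  have hself : rowForm J (u - v) (u - v) = 2 * rowForm J u (u - v) := by
    simp only [map_sub, LinearMap.sub_apply, rowForm_comm hJt v u, huv]
    ring
  have hY : -rowForm J u (u - v) ≠ 0 := by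
    rw [neg_ne_zero]
    rintro h
    exact hsub (by rw [hself, h, mul_zero])
  refine ⟨Nmat J (u - v) (-rowForm J u (u - v)),
    Nmat_isometry hJ hJt hY (by rw [hself]; ring), ?_⟩
  rw [row_mul_Nmat, inv_neg, neg_mul, inv_mul_cancel₀ (neg_ne_zero.mp hY)]
  module

lemma exists_isometry_mul_eq (hJ : IsUnit J) (hJt : Jᵀ = J) (h2 : (2 : F) ≠ 0)
    {u v : Matrix (Fin 1) (Fin n) F} (huv : rowForm J u u = rowForm J v v)
    (hu : rowForm J u u ≠ 0) :
    ∃ g : Matrix (Fin n) (Fin n) F, gᵀ * J * g = J ∧ u * g = v := by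
  by_cases hsub : rowForm J (u - v) (u - v) = 0
  · -- Reflect `u` to `-v` in `u + v`, then `-v` to `v` in `2v`.
    have hadd : rowForm J (u - -v) (u - -v) ≠ 0 := by
      have h : rowForm J (u - -v) (u - -v) = 4 * rowForm J u u - rowForm J (u - v) (u - v) := by
        simp only [map_sub, map_neg, LinearMap.sub_apply, LinearMap.neg_apply,
          rowForm_comm hJt v u, huv]
        ring
      rw [h, hsub, sub_zero]
      exact mul_ne_zero (by rw [show (4 : F) = 2 * 2 by norm_num]; exact mul_ne_zero h2 h2) hu
    have hneg : rowForm J (-v - v) (-v - v) ≠ 0 := by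
      rw [show -v - v = (-2 : F) • v by module]
      simp only [map_smul, LinearMap.smul_apply, smul_eq_mul, ← huv]
      exact mul_ne_zero (neg_ne_zero.mpr h2) (mul_ne_zero (neg_ne_zero.mpr h2) hu)
    obtain ⟨g₁, hg₁, hug₁⟩ := exists_isometry_mul_eq_of_anisotropic_sub hJ hJt
      (by simpa using huv) hadd
    obtain ⟨g₂, hg₂, hvg₂⟩ := exists_isometry_mul_eq_of_anisotropic_sub hJ hJt
      (by simp) hneg
    exact ⟨g₁ * g₂, isometry_mul hg₁ hg₂, by rw [← Matrix.mul_assoc, hug₁, hvg₂]⟩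
  · exact exists_isometry_mul_eq_of_anisotropic_sub hJ hJt huv hsub

end Witt

theorem N_conj_iff_square_orthogonal_general
    (F : Type*) [Field F] (hF : ringChar F ≠ 2)
    (n : ℕ)
    (J : Matrix (Fin n) (Fin n) F) (hJ : IsUnit J) (hJt : Jᵀ = J)
    (X X' : Matrix (Fin 1) (Fin n) F) (Y Y' : F)
    (hY : Y ≠ 0) (hY' : Y' ≠ 0)
    (hadm : (X * (-(J⁻¹ * Xᵀ))) 0 0 = 2 * Y)
    (hadm' : (X' * (-(J⁻¹ * X'ᵀ))) 0 0 = 2 * Y') :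
    IsGJConj J (Nmat J X Y) (Nmat J X' Y') ↔ IsSquare (Y' * Y⁻¹) := by
  have h2 : (2 : F) ≠ 0 := Ring.two_ne_zero hF
  have hXX := rowForm_self_of_admissible hadm
  have hXX' := rowForm_self_of_admissible hadm'
  constructor
  · rintro ⟨g, hg, hconj⟩
    refine isSquare_of_Nmat_eq hJt h2 hXX' (W := X * g⁻¹) ?_
    rw [← hconj, ← conj_Nmat_mul hJ hg (X * g⁻¹),
      Matrix.nonsing_inv_mul_cancel_right _ _ (isUnit_det_of_isometry hJ hg)]
  · rintro ⟨μ, hμ⟩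
    have hY'μ : Y' = μ ^ 2 * Y := by
      rw [pow_two, ← hμ, inv_mul_cancel_right₀ hY]
    have hμ0 : μ ≠ 0 := by
      rintro rfl
      exact hY' (by simpa using hY'μ)
    obtain ⟨g, hg, hX'g⟩ := exists_isometry_mul_eq hJ hJt h2 (u := X') (v := μ • X)
      (by simp only [map_smul, LinearMap.smul_apply, smul_eq_mul, hXX, hXX', hY'μ]; ring)
      (by rw [hXX']; exact neg_ne_zero.mpr (mul_ne_zero h2 hY'))
    refine ⟨g, hg, ?_⟩
    rw [← conj_Nmat_mul hJ hg X' Y', hX'g, hY'μ, Nmat_smul hμ0]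

/-- Lemma 3.3(ii)(iii), orthogonal case: `J` is an invertible symmetric matrix over `𝔽_q`
(`q` odd).  For admissible pairs `(X,Y)` and `(X',Y')` (nonzero `X`, nonzero `Y`, with
`X·(-J⁻¹·Xᵀ) = 2Y` and `X'·(-J⁻¹·X'ᵀ) = 2Y'`), the matrices `N(X,Y)` and `N(X',Y')` are
conjugate by an element of `G(J)` iff `Y'·Y⁻¹` is a square in `𝔽_qˣ`; in particular, the
`G(J)`-conjugacy class of `N(X,Y)` is determined by the square class of `Y`. -/
theorem N_conj_iff_square_orthogonal
    (F : Type*) [Field F] [Fintype F] (hF : ringChar F ≠ 2)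
    (n : ℕ)
    (J : Matrix (Fin n) (Fin n) F) (hJ : IsUnit J) (hJt : Jᵀ = J)
    (X X' : Matrix (Fin 1) (Fin n) F) (Y Y' : F)
    (hX : X ≠ 0) (hY : Y ≠ 0) (hX' : X' ≠ 0) (hY' : Y' ≠ 0)
    (hadm : (X * (-(J⁻¹ * Xᵀ))) 0 0 = 2 * Y)
    (hadm' : (X' * (-(J⁻¹ * X'ᵀ))) 0 0 = 2 * Y') :
    IsGJConj J (Nmat J X Y) (Nmat J X' Y') ↔ IsSquare (Y' * Y⁻¹) :=
  N_conj_iff_square_orthogonal_general F hF n J hJ hJt X X' Y Y' hY hY' hadm hadm'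
end

section
/- Let h ∈ GL(n, 𝔽_q) and λ ∈ 𝔽_qˣ satisfy hᵀ·J·h = λ·J. Then for every admissible pair (X, Y), the pair (X·h⁻¹, λ⁻¹·Y) is again admissible, and h·N(X, Y)·h⁻¹ = N(X·h⁻¹, λ⁻¹·Y). (Equivariance of the map N under the similitude group, used in the proof of Lemma 3.3.) -/
open Matrix

variable {F : Type*} [Field F] {n : ℕ}

/-! A similitude `h` with multiplier `l` satisfies `J⁻¹·(h⁻¹)ᵀ = l⁻¹·h·J⁻¹`, so the map
`X ↦ ᵅX = -J⁻¹·Xᵀ` intertwines right multiplication by `h⁻¹` with left multiplication by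
`l⁻¹·h`. Both the quadratic form `X·ᵅX` and the rank-one part `ᵅX·X` of `N(X,Y)` therefore
pick up exactly the factor `l⁻¹`, which the rescaling `Y ↦ l⁻¹·Y` absorbs. -/

section Similitude

variable {K ι m : Type*} [Field K] [Fintype m] [DecidableEq m]
  {J h : Matrix m m K} {l : K}

theorem inv_mul_transpose_inv_of_similitude (hJ : IsUnit J.det) (hl : l ≠ 0)
    (hsim : hᵀ * J * h = l • J) : J⁻¹ * h⁻¹ᵀ = l⁻¹ • (h * J⁻¹) := by
  have hright : hᵀ * J * (l⁻¹ • (h * J⁻¹)) = 1 := by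
    rw [Matrix.mul_smul, ← Matrix.mul_assoc, hsim, Matrix.smul_mul, smul_smul,
      inv_mul_cancel₀ hl, one_smul, mul_nonsing_inv J hJ]
  rw [transpose_nonsing_inv, ← Matrix.mul_inv_rev, inv_eq_right_inv hright]

theorem inv_mul_transpose_mul_inv_of_similitude (hJ : IsUnit J.det) (hl : l ≠ 0)
    (hsim : hᵀ * J * h = l • J) (X : Matrix ι m K) :
    J⁻¹ * (X * h⁻¹)ᵀ = l⁻¹ • (h * (J⁻¹ * Xᵀ)) := by
  rw [transpose_mul, ← Matrix.mul_assoc, inv_mul_transpose_inv_of_similitude hJ hl hsim,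
    Matrix.smul_mul, Matrix.mul_assoc]

theorem mul_inv_mul_neg_inv_mul_transpose_of_similitude (hJ : IsUnit J.det) (hh : IsUnit h.det)
    (hl : l ≠ 0) (hsim : hᵀ * J * h = l • J) (X : Matrix ι m K) :
    X * h⁻¹ * (-(J⁻¹ * (X * h⁻¹)ᵀ)) = l⁻¹ • (X * (-(J⁻¹ * Xᵀ))) := by
  rw [inv_mul_transpose_mul_inv_of_similitude hJ hl hsim, Matrix.mul_neg, Matrix.mul_neg,
    Matrix.mul_smul, ← Matrix.mul_assoc, nonsing_inv_mul_cancel_right h X hh, smul_neg]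

end Similitude

theorem conj_Nmat_of_similitude {J h : Matrix (Fin n) (Fin n) F} {l : F} (hJ : IsUnit J.det)
    (hh : IsUnit h.det) (hl : l ≠ 0) (hsim : hᵀ * J * h = l • J)
    (X : Matrix (Fin 1) (Fin n) F) (Y : F) :
    h * Nmat J X Y * h⁻¹ = Nmat J (X * h⁻¹) (l⁻¹ * Y) := by
  have hscale : (l⁻¹ * Y)⁻¹ * l⁻¹ = Y⁻¹ := by
    rw [mul_inv, inv_inv, mul_right_comm, mul_inv_cancel₀ hl, one_mul]
  rw [Nmat, Nmat, inv_mul_transpose_mul_inv_of_similitude hJ hl hsim, Matrix.smul_mul, smul_smul,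
    hscale, mul_add, add_mul, mul_one, mul_nonsing_inv h hh, Matrix.mul_smul, Matrix.smul_mul]
  simp only [Matrix.mul_assoc]

theorem N_similitude_equivariance_general
    (F : Type*) [Field F]
    (n : ℕ) (ε : F)
    (J : Matrix (Fin n) (Fin n) F) (hJ : IsUnit J)
    (h : Matrix (Fin n) (Fin n) F) (hh : IsUnit h)
    (l : F) (hl : l ≠ 0) (hsim : hᵀ * J * h = l • J)
    (X : Matrix (Fin 1) (Fin n) F) (hX : X ≠ 0) (Y : F) (hY : Y ≠ 0)
    (hadm : (X * (-(J⁻¹ * Xᵀ))) 0 0 = (1 + ε) * Y) :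
    (X * h⁻¹ ≠ 0 ∧ l⁻¹ * Y ≠ 0 ∧
        ((X * h⁻¹) * (-(J⁻¹ * (X * h⁻¹)ᵀ))) 0 0 = (1 + ε) * (l⁻¹ * Y)) ∧
      h * Nmat J X Y * h⁻¹ = Nmat J (X * h⁻¹) (l⁻¹ * Y) := by
  rw [isUnit_iff_isUnit_det] at hJ hh
  have hXh : X * h⁻¹ ≠ 0 := fun h0 ↦ hX <| by
    rw [← nonsing_inv_mul_cancel_right h X hh, h0, Matrix.zero_mul]
  refine ⟨⟨hXh, mul_ne_zero (inv_ne_zero hl) hY, ?_⟩, conj_Nmat_of_similitude hJ hh hl hsim X Y⟩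
  rw [mul_inv_mul_neg_inv_mul_transpose_of_similitude hJ hh hl hsim, Matrix.smul_apply, hadm,
    smul_eq_mul, mul_left_comm]

/-- Equivariance of the map `N` under the similitude group (used in the proof of
Lemma 3.3): if `hᵀ·J·h = λ·J` with `h ∈ GL(n,𝔽_q)` and `λ ∈ 𝔽_qˣ`, then for every
admissible pair `(X,Y)` the pair `(X·h⁻¹, λ⁻¹·Y)` is again admissible and
`h·N(X,Y)·h⁻¹ = N(X·h⁻¹, λ⁻¹·Y)`. -/
theorem N_similitude_equivariance
    (F : Type*) [Field F] [Fintype F] (hF : ringChar F ≠ 2)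
    (n : ℕ) (ε : F) (hε : ε = 1 ∨ ε = -1)
    (J : Matrix (Fin n) (Fin n) F) (hJ : IsUnit J) (hJt : Jᵀ = ε • J)
    (h : Matrix (Fin n) (Fin n) F) (hh : IsUnit h)
    (l : F) (hl : l ≠ 0) (hsim : hᵀ * J * h = l • J)
    (X : Matrix (Fin 1) (Fin n) F) (hX : X ≠ 0) (Y : F) (hY : Y ≠ 0)
    (hadm : (X * (-(J⁻¹ * Xᵀ))) 0 0 = (1 + ε) * Y) :
    (X * h⁻¹ ≠ 0 ∧ l⁻¹ * Y ≠ 0 ∧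
        ((X * h⁻¹) * (-(J⁻¹ * (X * h⁻¹)ᵀ))) 0 0 = (1 + ε) * (l⁻¹ * Y)) ∧
      h * Nmat J X Y * h⁻¹ = Nmat J (X * h⁻¹) (l⁻¹ * Y) :=
  N_similitude_equivariance_general F n ε J hJ h hh l hl hsim X hX Y hY hadm
end
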